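/- There exists a constant C > 0 such that for all ξ ≥ 2 and all w ∈ (−1,1) one has |Φ(ξ,w) − E(ξ,w)| ≤ C·ξ⁻², where Φ(ξ,w) = ∫_ξ^∞ ∫_{−1}^{1} Φ₀(η,w,z) dz dη, and E(ξ,w) = (3/(2π²))·(1 − u)²·ξ⁻¹ if u = ξ(1−|w|) < 1, and E(ξ,w) = 0 otherwise. -/

import Mathlib

/-!
Take `w ≥ 0` (the symmetry `Φ₀ η (-w) (-z) = Φ₀ η w z` handles `w < 0`) and `η ≥ 2`.
Then `Φ₀ η w` vanishes on `[-1, 1 - η⁻¹]`, while on `[1 - η⁻¹, 1]` it equals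
`(6/π²) · max (min w z - (1 - η⁻¹)) 0 / (w + z)`. Replacing `w + z` by `2` there costs
`O(η⁻²)` pointwise on an interval of length `η⁻¹`, and the resulting piecewise linear integrand
integrates to `(3/(2π²)) · max (η⁻² - (1 - w)²) 0`. Integrating over `η > ξ`, the error becomes
`O(ξ⁻²)` and the main term becomes exactly `E₂ ξ w`, because `max (η⁻² - δ²) 0` vanishes for
`η > δ⁻¹`.
-/

open Real Set MeasureTheory

noncomputable def Υ (x : ℝ) : ℝ := if x ≤ 0 then 0 else if x < 1 then x else 1

noncomputable def Φ₀ (ξ w z : ℝ) : ℝ :=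
  if w + z ≠ 0 then (6 / π ^ 2) * Υ (1 + (ξ⁻¹ - max |w| |z| - 1) / |w + z|)
  else if ξ⁻¹ < 1 + |w| then 0 else 6 / π ^ 2

noncomputable def Φ (ξ w : ℝ) : ℝ := ∫ η in Ioi ξ, ∫ z in (-1 : ℝ)..1, Φ₀ η w z

/-- The main asymptotic term of `Φ(ξ,w)` as `ξ → ∞`. -/
noncomputable def E₂ (ξ w : ℝ) : ℝ :=
  if ξ * (1 - |w|) < 1 then
    (3 / (2 * π ^ 2)) * (1 - ξ * (1 - |w|)) ^ 2 * ξ⁻¹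
  else 0

lemma Υ_eq_max_zero {x : ℝ} (h : x < 1) : Υ x = max x 0 := by
  unfold Υ
  split_ifs with h0
  · exact (max_eq_right h0).symm
  · exact (max_eq_left (not_le.mp h0).le).symm

lemma Υ_mem_Icc (x : ℝ) : Υ x ∈ Icc 0 1 := by
  unfold Υ
  split_ifs <;> constructor <;> linarith

lemma Φ₀_neg_neg (η w z : ℝ) : Φ₀ η (-w) (-z) = Φ₀ η w z := by
  simp only [Φ₀, ← neg_add, abs_neg, ne_eq, neg_eq_zero]

lemma abs_Φ₀_le (η w z : ℝ) : |Φ₀ η w z| ≤ 6 / π ^ 2 := by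
  have hc : 0 ≤ 6 / π ^ 2 := by positivity
  have hΥ := Υ_mem_Icc (1 + (η⁻¹ - max |w| |z| - 1) / |w + z|)
  unfold Φ₀
  split_ifs
  · rw [abs_of_nonneg (mul_nonneg hc hΥ.1)]
    exact mul_le_of_le_one_right hc hΥ.2
  · simpa using hc
  · rw [abs_of_nonneg hc]

lemma measurable_Φ₀_uncurry (w : ℝ) : Measurable fun p : ℝ × ℝ => Φ₀ p.1 w p.2 := by
  have hΥ : Measurable Υ :=
    Measurable.ite measurableSet_Iic measurable_const
      (Measurable.ite measurableSet_Iio measurable_id measurable_const)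
  unfold Φ₀
  refine Measurable.ite ?_ ?_ ?_
  · exact (measurableSet_eq_fun (measurable_const.add measurable_snd) measurable_const).compl
  · fun_prop
  · exact Measurable.ite (measurableSet_lt measurable_fst.inv measurable_const)
      measurable_const measurable_const

lemma intervalIntegrable_Φ₀ (η w a b : ℝ) : IntervalIntegrable (Φ₀ η w) volume a b :=
  intervalIntegrable_const.mono_fun'
    ((measurable_Φ₀_uncurry w).comp measurable_prodMk_left).aestronglyMeasurable
    (ae_of_all _ (abs_Φ₀_le η w))

lemma Φ₀_eq_zero {η w z : ℝ} (hη : η⁻¹ < 1) (hw : 0 ≤ w) (hz : z ≤ 1 - η⁻¹) :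
    Φ₀ η w z = 0 := by
  unfold Φ₀
  split_ifs with hwz hlt
  · have hpos : 0 < |w + z| := abs_pos.mpr hwz
    have hsum : |w + z| ≤ 1 + max |w| |z| - η⁻¹ := by
      rcases le_or_gt 0 z with hz0 | hz0
      · rw [abs_of_nonneg (by linarith), abs_of_nonneg hw, abs_of_nonneg hz0,
          ← max_add_min w z]
        linarith [min_le_right w z]
      · have : |w + z| ≤ max |w| |z| := by
          rw [abs_of_nonneg hw, abs_of_neg hz0, abs_le]
          constructor <;> linarith [le_max_left w (-z), le_max_right w (-z)]
        linarith
    have : (η⁻¹ - max |w| |z| - 1) / |w + z| ≤ -1 := by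
      rw [div_le_iff₀ hpos]
      linarith
    rw [Υ, if_pos (by linarith), mul_zero]
  · rfl
  · exact absurd (by linarith [abs_nonneg w]) hlt

lemma Φ₀_eq {η w z : ℝ} (hη : η⁻¹ < 1) (hw : 0 ≤ w) (hz : 1 - η⁻¹ ≤ z) :
    Φ₀ η w z = 6 / π ^ 2 * (max (min w z - (1 - η⁻¹)) 0 / (w + z)) := by
  have hwz : 0 < w + z := by linarith
  have harg : 1 + (η⁻¹ - max w z - 1) / (w + z) = (min w z - (1 - η⁻¹)) / (w + z) := by
    field_simp
    linarith [max_add_min w z]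
  have harg_lt : (min w z - (1 - η⁻¹)) / (w + z) < 1 := by
    rw [div_lt_one hwz]
    linarith [min_le_left w z]
  rw [Φ₀, if_pos hwz.ne', abs_of_nonneg hw, abs_of_nonneg (by linarith : 0 ≤ z),
    abs_of_pos hwz, harg, Υ_eq_max_zero harg_lt, ← max_div_div_right hwz.le, zero_div]

lemma abs_Φ₀_sub_le {η w z : ℝ} (hη : 2 ≤ η) (hw : 0 ≤ w) (hw1 : w ≤ 1)
    (hz : 1 - η⁻¹ ≤ z) (hz1 : z ≤ 1) :
    |Φ₀ η w z - 3 / π ^ 2 * max (min w z - (1 - η⁻¹)) 0| ≤ 6 / π ^ 2 * η⁻¹ ^ 2 := by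
  have hε : η⁻¹ ≤ 1 / 2 := by
    rw [inv_le_comm₀ (by linarith) (by norm_num)]
    linarith
  have hε0 : 0 < η⁻¹ := by positivity
  set m := max (min w z - (1 - η⁻¹)) 0 with hm
  have hwz : 0 < w + z := by linarith
  have hdiff :
      Φ₀ η w z - 3 / π ^ 2 * m = 6 / π ^ 2 * (m * (2 - (w + z)) / (2 * (w + z))) := by
    rw [Φ₀_eq (by linarith) hw hz, ← hm]
    field_simp
    ring
  rw [hdiff, abs_mul, abs_of_pos (by positivity : (0 : ℝ) < 6 / π ^ 2)]
  gcongr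
  rcases le_or_gt (min w z - (1 - η⁻¹)) 0 with hmin | hmin
  · simp only [hm, max_eq_right hmin, zero_mul, zero_div, abs_zero]
    positivity
  -- once `m > 0`, both `w` and `z` exceed `1 - η⁻¹`,
  -- so `w + z ≥ 1` and `2 - (w + z) ≤ 2η⁻¹`
  have hwa : 1 - η⁻¹ < w := by linarith [min_le_left w z]
  have hza : 1 - η⁻¹ < z := by linarith [min_le_right w z]
  have hm_le : m ≤ η⁻¹ := max_le (by linarith [min_le_right w z]) hε0.le
  have hm0 : 0 ≤ m := le_max_right _ _
  rw [abs_of_nonneg (div_nonneg (mul_nonneg hm0 (by linarith)) (by linarith)),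
    div_le_iff₀ (by linarith)]
  nlinarith

lemma integral_max_min_sub {a w : ℝ} (ha : -1 ≤ a) (ha1 : a ≤ 1) (hw : w ≤ 1) :
    ∫ z in (-1 : ℝ)..1, max (min w z - a) 0 = max ((1 - a) ^ 2 - (1 - w) ^ 2) 0 / 2 := by
  have hcont : Continuous fun z : ℝ => max (min w z - a) 0 := by fun_prop
  have hint (b c : ℝ) : IntervalIntegrable (fun z : ℝ => max (min w z - a) 0) volume b c :=
    hcont.intervalIntegrable b c
  rcases le_or_gt w a with hwa | hwa
  · rw [max_eq_right (by nlinarith), zero_div]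
    refine (intervalIntegral.integral_congr fun z _ => ?_).trans intervalIntegral.integral_zero
    exact max_eq_right (by linarith [min_le_left w z])
  have hlow : ∫ z in (-1 : ℝ)..a, max (min w z - a) 0 = 0 := by
    refine (intervalIntegral.integral_congr fun z hz => ?_).trans intervalIntegral.integral_zero
    rw [uIcc_of_le ha] at hz
    exact max_eq_right (by linarith [min_le_right w z, hz.2])
  have hmid : ∫ z in a..w, max (min w z - a) 0 = (w - a) ^ 2 / 2 := by
    rw [intervalIntegral.integral_congr (g := fun z => z - a) fun z hz => ?_]
    · rw [intervalIntegral.integral_sub intervalIntegral.intervalIntegrable_id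
        intervalIntegrable_const, integral_id, intervalIntegral.integral_const, smul_eq_mul]
      ring
    rw [uIcc_of_le hwa.le] at hz
    simp only [min_eq_right hz.2, max_eq_left (sub_nonneg.mpr hz.1)]
  have hhigh : ∫ z in w..1, max (min w z - a) 0 = (1 - w) * (w - a) := by
    rw [intervalIntegral.integral_congr (g := fun _ => w - a) fun z hz => ?_]
    · rw [intervalIntegral.integral_const, smul_eq_mul]
    rw [uIcc_of_le hw] at hz
    simp only [min_eq_left hz.1, max_eq_left (sub_nonneg.mpr hwa.le)]
  rw [← intervalIntegral.integral_add_adjacent_intervals (hint _ a) (hint a _),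
    ← intervalIntegral.integral_add_adjacent_intervals (hint a w) (hint w _),
    hlow, hmid, hhigh, max_eq_left (by nlinarith)]
  ring

lemma abs_integral_Φ₀_sub_le_of_nonneg {η w : ℝ} (hη : 2 ≤ η) (hw : 0 ≤ w) (hw1 : w < 1) :
    |(∫ z in (-1 : ℝ)..1, Φ₀ η w z) - 3 / (2 * π ^ 2) * max (η⁻¹ ^ 2 - (1 - w) ^ 2) 0|
      ≤ 6 / π ^ 2 * η⁻¹ ^ 3 := by
  have hε0 : 0 < η⁻¹ := by positivity
  have hε : η⁻¹ < 1 := inv_lt_one_of_one_lt₀ (by linarith)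
  set a := 1 - η⁻¹ with ha
  set ψ : ℝ → ℝ := fun z => 3 / π ^ 2 * max (min w z - a) 0 with hψ
  have hψint (b c : ℝ) : IntervalIntegrable ψ volume b c :=
    Continuous.intervalIntegrable (by fun_prop) b c
  have hdint (b c : ℝ) : IntervalIntegrable (fun z => Φ₀ η w z - ψ z) volume b c :=
    (intervalIntegrable_Φ₀ η w b c).sub (hψint b c)
  have hψ_integral :
      ∫ z in (-1 : ℝ)..1, ψ z = 3 / (2 * π ^ 2) * max (η⁻¹ ^ 2 - (1 - w) ^ 2) 0 := by
    rw [intervalIntegral.integral_const_mul,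
      integral_max_min_sub (by linarith) (by linarith) hw1.le, sub_sub_cancel]
    ring
  have hlow : ∫ z in (-1 : ℝ)..a, Φ₀ η w z - ψ z = 0 := by
    refine (intervalIntegral.integral_congr fun z hz => ?_).trans intervalIntegral.integral_zero
    rw [uIcc_of_le (by linarith)] at hz
    have hmin : min w z - a ≤ 0 := by linarith [min_le_right w z, hz.2]
    simp only [hψ, Φ₀_eq_zero hε hw hz.2, max_eq_right hmin, mul_zero, sub_zero]
  have hhigh : ‖∫ z in a..1, Φ₀ η w z - ψ z‖ ≤ 6 / π ^ 2 * η⁻¹ ^ 2 * |1 - a| := by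
    refine intervalIntegral.norm_integral_le_of_norm_le_const fun z hz => ?_
    rw [uIoc_of_le (by linarith)] at hz
    exact abs_Φ₀_sub_le hη hw hw1.le hz.1.le hz.2
  rw [← hψ_integral,
    ← intervalIntegral.integral_sub (intervalIntegrable_Φ₀ η w _ _) (hψint _ _),
    ← intervalIntegral.integral_add_adjacent_intervals (hdint _ a) (hdint a _), hlow, zero_add]
  rw [Real.norm_eq_abs, ha, sub_sub_cancel, abs_of_pos hε0] at hhigh
  linarith

lemma abs_integral_Φ₀_sub_le {η w : ℝ} (hη : 2 ≤ η) (hw : w ∈ Ioo (-1 : ℝ) 1) :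
    |(∫ z in (-1 : ℝ)..1, Φ₀ η w z) - 3 / (2 * π ^ 2) * max (η⁻¹ ^ 2 - (1 - |w|) ^ 2) 0|
      ≤ 6 / π ^ 2 * η⁻¹ ^ 3 := by
  rcases le_or_gt 0 w with h | h
  · rw [abs_of_nonneg h]
    exact abs_integral_Φ₀_sub_le_of_nonneg hη h hw.2
  · have hsymm : ∫ z in (-1 : ℝ)..1, Φ₀ η w z = ∫ z in (-1 : ℝ)..1, Φ₀ η (-w) z := by
      simp_rw [← Φ₀_neg_neg η w]
      simp [intervalIntegral.integral_comp_neg (a := -1) (b := 1) (Φ₀ η (-w))]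
    rw [hsymm, abs_of_neg h]
    exact abs_integral_Φ₀_sub_le_of_nonneg hη (by linarith) (by linarith [hw.1])

lemma stronglyMeasurable_integral_Φ₀ (w : ℝ) :
    StronglyMeasurable fun η => ∫ z in (-1 : ℝ)..1, Φ₀ η w z := by
  simp_rw [intervalIntegral.integral_of_le (show (-1 : ℝ) ≤ 1 by norm_num)]
  exact (measurable_Φ₀_uncurry w).stronglyMeasurable.integral_prod_right'

lemma continuousOn_inv_sq_sub_sq {b : ℝ} (δ : ℝ) (hb : 0 < b) :
    ContinuousOn (fun η : ℝ => η⁻¹ ^ 2 - δ ^ 2) (Ici b) :=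
  ((continuousOn_inv₀.mono fun _ hη => (hb.trans_le hη).ne').pow 2).sub continuousOn_const

lemma integral_inv_sq_sub_sq {δ b c : ℝ} (hb : 0 < b) (hbc : b ≤ c) :
    ∫ η in b..c, η⁻¹ ^ 2 - δ ^ 2 = b⁻¹ - c⁻¹ - δ ^ 2 * (c - b) := by
  have hderiv :
      ∀ η ∈ uIcc b c, HasDerivAt (fun η => -η⁻¹ - δ ^ 2 * η) (η⁻¹ ^ 2 - δ ^ 2) η := by
    intro η hη
    rw [uIcc_of_le hbc] at hη
    have hη0 : η ≠ 0 := (hb.trans_le hη.1).ne'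
    refine ((hasDerivAt_inv hη0).neg.sub ((hasDerivAt_id η).const_mul (δ ^ 2))).congr_deriv ?_
    rw [inv_pow]
    ring
  have hint : IntervalIntegrable (fun η => η⁻¹ ^ 2 - δ ^ 2) volume b c := by
    refine ((continuousOn_inv_sq_sub_sq δ hb).mono ?_).intervalIntegrable
    rw [uIcc_of_le hbc]
    exact Icc_subset_Ici_self
  rw [intervalIntegral.integral_eq_sub_of_hasDerivAt hderiv hint]
  ring

lemma integral_Ioi_max_inv_sq_sub_sq {ξ δ : ℝ} (hξ : 0 < ξ) (hδ : 0 < δ) :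
    IntegrableOn (fun η => max (η⁻¹ ^ 2 - δ ^ 2) 0) (Ioi ξ) ∧
      ∫ η in Ioi ξ, max (η⁻¹ ^ 2 - δ ^ 2) 0 =
        if ξ * δ < 1 then (1 - ξ * δ) ^ 2 * ξ⁻¹ else 0 := by
  set b := max ξ δ⁻¹
  have hvanish : ∀ η ∈ Ioi ξ \ Ioc ξ b, max (η⁻¹ ^ 2 - δ ^ 2) 0 = 0 := by
    rintro η ⟨hη, hηb⟩
    have hbη : δ⁻¹ < η := (le_max_right _ _).trans_lt (not_le.mp fun h => hηb ⟨hη, h⟩)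
    have : η⁻¹ < δ := (inv_lt_comm₀ hδ (hξ.trans hη)).mp hbη
    exact max_eq_right (by nlinarith [inv_pos.mpr (hξ.trans hη)])
  have hpos :
      EqOn (fun η => max (η⁻¹ ^ 2 - δ ^ 2) 0) (fun η => η⁻¹ ^ 2 - δ ^ 2) (Ioc ξ b) := by
    intro η hη
    have hη0 : 0 < η := hξ.trans hη.1
    have : δ ≤ η⁻¹ :=
      (le_inv_comm₀ hη0 hδ).mp ((le_max_iff.mp hη.2).resolve_left (not_le.mpr hη.1))
    exact max_eq_left (by nlinarith)
  have hint : IntegrableOn (fun η => max (η⁻¹ ^ 2 - δ ^ 2) 0) (Ioc ξ b) := by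
    refine IntegrableOn.congr_fun ?_ hpos.symm measurableSet_Ioc
    exact ((continuousOn_inv_sq_sub_sq δ hξ).mono Icc_subset_Ici_self).integrableOn_Icc
      |>.mono_set Ioc_subset_Icc_self
  refine ⟨hint.of_forall_sdiff_eq_zero measurableSet_Ioi hvanish, ?_⟩
  rw [setIntegral_eq_of_subset_of_forall_sdiff_eq_zero measurableSet_Ioi Ioc_subset_Ioi_self
    hvanish, setIntegral_congr_fun measurableSet_Ioc hpos,
    ← intervalIntegral.integral_of_le (le_max_left _ _),
    integral_inv_sq_sub_sq hξ (le_max_left _ _)]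
  split_ifs with h
  · have : ξ < δ⁻¹ := by rwa [lt_inv_comm₀ hξ hδ, inv_eq_one_div, lt_div_iff₀ hξ, mul_comm]
    rw [max_eq_right this.le]
    field_simp
  · have : δ⁻¹ ≤ ξ := by
      rw [inv_le_comm₀ hδ hξ, inv_eq_one_div, div_le_iff₀ hξ, mul_comm]
      exact not_lt.mp h
    rw [max_eq_left this]
    ring

lemma integral_Ioi_inv_pow_three {ξ : ℝ} (hξ : 0 < ξ) :
    IntegrableOn (fun η : ℝ => η⁻¹ ^ 3) (Ioi ξ) ∧ ∫ η in Ioi ξ, η⁻¹ ^ 3 = ξ⁻¹ ^ 2 / 2 := by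
  have hrpow : EqOn (fun η : ℝ => η ^ (-3 : ℝ)) (fun η => η⁻¹ ^ 3) (Ioi ξ) := fun η hη => by
    simp only [rpow_neg (hξ.trans hη).le, rpow_ofNat, inv_pow]
  refine ⟨(integrableOn_Ioi_rpow_of_lt (by norm_num) hξ).congr_fun hrpow measurableSet_Ioi, ?_⟩
  rw [← setIntegral_congr_fun measurableSet_Ioi hrpow, integral_Ioi_rpow_of_lt (by norm_num) hξ]
  rw [show (-3 : ℝ) + 1 = -2 by norm_num, rpow_neg hξ.le, rpow_ofNat, inv_pow]
  ring

lemma norm_integral_sub_le_of_norm_sub_le {α E : Type*} [MeasurableSpace α] {μ : Measure α}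
    [NormedAddCommGroup E] [NormedSpace ℝ E] {f g : α → E} {h : α → ℝ}
    (hf : AEStronglyMeasurable f μ) (hg : Integrable g μ) (hh : Integrable h μ)
    (hfg : ∀ᵐ x ∂μ, ‖f x - g x‖ ≤ h x) : ‖∫ x, f x ∂μ - ∫ x, g x ∂μ‖ ≤ ∫ x, h x ∂μ := by
  have hfg_int : Integrable (fun x => f x - g x) μ :=
    hh.mono' (hf.sub hg.aestronglyMeasurable) hfg
  have hf_int : Integrable f μ := (hfg_int.add hg).congr (.of_forall fun x => by simp)
  rw [← integral_sub hf_int hg]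
  exact norm_integral_le_of_norm_le hh hfg

/-- Uniform asymptotics: `Φ(ξ,w) = E₂(ξ,w) + O(ξ⁻²)` as `ξ → ∞`, uniformly in
`w ∈ (−1,1)`. -/
theorem stmt17 :
    ∃ C : ℝ, 0 < C ∧ ∀ ξ w : ℝ, 2 ≤ ξ → w ∈ Ioo (-1 : ℝ) 1 →
      |Φ ξ w - E₂ ξ w| ≤ C * ξ⁻¹ ^ 2 := by
  refine ⟨3 / π ^ 2, by positivity, fun ξ w hξ hw => ?_⟩
  have hξ0 : 0 < ξ := by linarith
  have hδ : 0 < 1 - |w| := sub_pos.mpr (abs_lt.mpr hw)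
  obtain ⟨hg_int, hg⟩ := integral_Ioi_max_inv_sq_sub_sq hξ0 hδ
  obtain ⟨hh_int, hh⟩ := integral_Ioi_inv_pow_three hξ0
  have hE : E₂ ξ w = 3 / (2 * π ^ 2) * ∫ η in Ioi ξ, max (η⁻¹ ^ 2 - (1 - |w|) ^ 2) 0 := by
    rw [hg, E₂]
    split_ifs <;> ring
  have hbound := norm_integral_sub_le_of_norm_sub_le
    (stronglyMeasurable_integral_Φ₀ w).aestronglyMeasurable (hg_int.const_mul _)
    (hh_int.const_mul (6 / π ^ 2)) ((ae_restrict_iff' measurableSet_Ioi).mpr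
      (ae_of_all _ fun η hη => abs_integral_Φ₀_sub_le (hξ.trans hη.le) hw))
  simp only [Real.norm_eq_abs, integral_const_mul, hh] at hbound
  rw [Φ, hE]
  exact hbound.trans_eq (by ring)
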